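/- Let d ∈ ℕ, 2 ≤ q < ∞, and let m ∈ ℕ with m ≥ q. Let t(x) = ∑_{j=1}^J t̂(k_j) exp(2πi k_j·x) be a trigonometric polynomial on 𝕋^d whose Fourier coefficients are arranged so that |t̂(k_1)| ≥ |t̂(k_2)| ≥ … ≥ |t̂(k_J)|, and for n ∈ ℕ let t_n(x) = ∑_{j=1}^{min(n,J)} t̂(k_j) exp(2πi k_j·x). Then there exists a trigonometric polynomial s ∈ Σ_{2m} with frequencies contained in {k_{2m+1},…,k_J} such that ‖t − t_{2m} − s‖_{L_q(𝕋^d)} ≤ (80/3) √(q/m) · ‖t − t_m‖_{𝒜_1}. -/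

import Mathlib

open MeasureTheory Real ENNReal

noncomputable section

/-- Normalized Lebesgue measure on the unit cube `[0,1]^d`, modelling the torus `𝕋^d`. -/
def unitCube (d : ℕ) : Measure (Fin d → ℝ) :=
  volume.restrict (Set.univ.pi fun _ => Set.Icc (0 : ℝ) 1)

/-- The complex exponential `exp(2πi k·x)`. -/
def trigChar {d : ℕ} (k : Fin d → ℤ) (x : Fin d → ℝ) : ℂ :=
  Complex.exp (2 * (Real.pi : ℂ) * Complex.I * ∑ j, (k j : ℂ) * (x j : ℂ))

/-- The `k`-th Fourier coefficient of `f`. -/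
def fourierCoef {d : ℕ} (f : (Fin d → ℝ) → ℂ) (k : Fin d → ℤ) : ℂ :=
  ∫ x, f x * Complex.exp (-(2 * (Real.pi : ℂ) * Complex.I) * ∑ j, (k j : ℂ) * (x j : ℂ))
    ∂(unitCube d)


/-!
Maurey's empirical method. Let `T = ∑_{j ≥ 2m} |a_j|`. The tail `f = ∑_{j ≥ 2m} a_j e_j` is the
mean of the random function `T (a_j / |a_j|) e_j`, where `j` is drawn with probability
`|a_j| / T`. Averaging `M = 2m` independent draws gives a `2m`-term polynomial `s` with
frequencies in the tail, and `f - s` is `1/M` times a sum of `M` independent centred terms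
bounded by `2T`. The bound `𝔼 e^{λY} ≤ e^{λ²B²}` (for `|λ| B ≤ 1`) on each term, together with
`|t|^q ≤ (q/λ)^q e^{-q} (e^{λt} + e^{-λt})` at `λ = √(q/M)/B`, gives the Khintchine-type moment
bound `𝔼 |f(x) - s(x)|^q ≤ 4 (4 √(q/M) T)^q` at every point `x`. Integrating over the torus,
some draw does at least as well as the average.
-/

open Finset

theorem exp_le_one_add_add_sq {x : ℝ} (hx : |x| ≤ 1) : exp x ≤ 1 + x + x ^ 2 := by
  linarith [(abs_le.mp (abs_exp_sub_one_sub_id_le hx)).2]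

theorem rpow_le_exp_mul_sub_one {y q : ℝ} (hy : 0 ≤ y) (hq : 0 ≤ q) :
    y ^ q ≤ exp (q * (y - 1)) := by
  rcases hy.eq_or_lt with rfl | hy
  · rcases hq.eq_or_lt with rfl | hq
    · simp
    · rw [zero_rpow hq.ne']
      positivity
  · rw [rpow_def_of_pos hy, mul_comm]
    exact exp_le_exp.mpr (mul_le_mul_of_nonneg_left (log_le_sub_one_of_pos hy) hq)

theorem abs_rpow_le_mul_exp_add_exp {q l : ℝ} (hq : 0 < q) (hl : 0 < l) (t : ℝ) :
    |t| ^ q ≤ (q / l) ^ q * exp (-q) * (exp (l * t) + exp ((-l) * t)) := by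
  have hscale : |t| ^ q = (q / l) ^ q * (l * |t| / q) ^ q := by
    rw [← mul_rpow (by positivity) (by positivity)]
    field_simp
  have hpow : (l * |t| / q) ^ q ≤ exp (-q) * exp |l * t| := by
    rw [← exp_add, abs_mul, abs_of_pos hl]
    refine (rpow_le_exp_mul_sub_one (by positivity) hq.le).trans_eq ?_
    congr 1
    field_simp
    ring
  calc |t| ^ q ≤ (q / l) ^ q * (exp (-q) * exp |l * t|) := by rw [hscale]; gcongr
    _ ≤ (q / l) ^ q * (exp (-q) * (exp (l * t) + exp (-(l * t)))) := by
      gcongr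
      exact exp_abs_le _
    _ = _ := by rw [neg_mul]; ring

theorem norm_rpow_le_two_rpow_mul (z : ℂ) {q : ℝ} (hq : 0 ≤ q) :
    ‖z‖ ^ q ≤ 2 ^ q * (|z.re| ^ q + |z.im| ^ q) := by
  have hmax : ‖z‖ ≤ 2 * max |z.re| |z.im| :=
    (Complex.norm_le_abs_re_add_abs_im z).trans
      (by linarith [le_max_left |z.re| |z.im|, le_max_right |z.re| |z.im|])
  calc ‖z‖ ^ q ≤ (2 * max |z.re| |z.im|) ^ q := by gcongr
    _ = 2 ^ q * max |z.re| |z.im| ^ q := mul_rpow zero_le_two (by positivity)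
    _ ≤ 2 ^ q * (|z.re| ^ q + |z.im| ^ q) := by
      gcongr
      rcases le_total |z.re| |z.im| with h | h
      · rw [max_eq_right h]
        linarith [rpow_nonneg (abs_nonneg z.re) q]
      · rw [max_eq_left h]
        linarith [rpow_nonneg (abs_nonneg z.im) q]

section ProductWeights

variable {ι : Type*} [Fintype ι] {M : ℕ} {p : ι → ℝ}

theorem sum_mul_exp_le_exp_sq {Y : ι → ℝ} {B l : ℝ} (hp : ∀ j, 0 ≤ p j)
    (hp1 : ∑ j, p j = 1) (hY : ∀ j, |Y j| ≤ B) (hmean : ∑ j, p j * Y j = 0)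
    (hlB : |l| * B ≤ 1) :
    ∑ j, p j * exp (l * Y j) ≤ exp (l ^ 2 * B ^ 2) := by
  have hpt : ∀ j, exp (l * Y j) ≤ 1 + l * Y j + l ^ 2 * B ^ 2 := fun j => by
    have hlY : |l * Y j| ≤ |l| * B := by
      rw [abs_mul]
      exact mul_le_mul_of_nonneg_left (hY j) (abs_nonneg l)
    have hsq : (l * Y j) ^ 2 ≤ l ^ 2 * B ^ 2 := by
      simpa [mul_pow] using pow_le_pow_left₀ (abs_nonneg _) hlY 2
    linarith [exp_le_one_add_add_sq (hlY.trans hlB)]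
  calc ∑ j, p j * exp (l * Y j) ≤ ∑ j, p j * (1 + l * Y j + l ^ 2 * B ^ 2) :=
        sum_le_sum fun j _ => mul_le_mul_of_nonneg_left (hpt j) (hp j)
    _ = ∑ j, p j + l * ∑ j, p j * Y j + (∑ j, p j) * (l ^ 2 * B ^ 2) := by
      simp only [mul_sum, sum_mul, ← sum_add_distrib]
      exact sum_congr rfl fun j _ => by ring
    _ ≤ exp (l ^ 2 * B ^ 2) := by
      rw [hp1, hmean]
      linarith [add_one_le_exp (l ^ 2 * B ^ 2)]

theorem sum_prod_eq_one (hp1 : ∑ j, p j = 1) : ∑ ω : Fin M → ι, ∏ i, p (ω i) = 1 := by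
  rw [← Fintype.sum_pow, hp1, one_pow]

theorem sum_prod_mul_exp_le {Y : ι → ℝ} {B s : ℝ} (hp : ∀ j, 0 ≤ p j)
    (hp1 : ∑ j, p j = 1) (hY : ∀ j, |Y j| ≤ B) (hmean : ∑ j, p j * Y j = 0)
    (hsB : |s| * B ≤ 1) :
    ∑ ω : Fin M → ι, (∏ i, p (ω i)) * exp (s * ∑ i, Y (ω i)) ≤ exp (s ^ 2 * B ^ 2 * M) := by
  have hfactor : ∑ ω : Fin M → ι, (∏ i, p (ω i)) * exp (s * ∑ i, Y (ω i)) =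
      (∑ j, p j * exp (s * Y j)) ^ M := by
    rw [Fintype.sum_pow]
    refine sum_congr rfl fun ω _ => ?_
    rw [mul_sum, exp_sum, ← prod_mul_distrib]
  rw [hfactor, mul_comm _ (M : ℝ), exp_nat_mul]
  exact pow_le_pow_left₀ (sum_nonneg fun j _ => mul_nonneg (hp j) (exp_nonneg _))
    (sum_mul_exp_le_exp_sq hp hp1 hY hmean hsB) M

theorem sum_prod_mul_abs_sum_rpow_le {Y : ι → ℝ} {B q : ℝ} (hp : ∀ j, 0 ≤ p j)
    (hp1 : ∑ j, p j = 1) (hY : ∀ j, |Y j| ≤ B) (hmean : ∑ j, p j * Y j = 0)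
    (hB : 0 < B) (hq : 0 < q) (hqM : q ≤ M) :
    ∑ ω : Fin M → ι, (∏ i, p (ω i)) * |∑ i, Y (ω i)| ^ q ≤ 2 * (√(q * M) * B) ^ q := by
  have hM : (0 : ℝ) < M := hq.trans_le hqM
  set l := √(q / M) / B with hl
  have hl0 : 0 < l := by positivity
  have hlB : |l| * B ≤ 1 := by
    rw [abs_of_pos hl0, hl, div_mul_cancel₀ _ hB.ne', sqrt_le_one, div_le_one hM]
    exact hqM
  have hlB' : |-l| * B ≤ 1 := by rwa [abs_neg]
  have hmgf : l ^ 2 * B ^ 2 * M = q := by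
    rw [hl, div_pow, sq_sqrt (by positivity)]
    field_simp
  have hql : q / l = √(q * M) * B := by
    rw [hl, sqrt_div' _ hM.le, sqrt_mul hq.le]
    field_simp
    rw [sq_sqrt hq.le]
  have hw : ∀ ω : Fin M → ι, 0 ≤ ∏ i, p (ω i) := fun ω => prod_nonneg fun i _ => hp (ω i)
  calc ∑ ω : Fin M → ι, (∏ i, p (ω i)) * |∑ i, Y (ω i)| ^ q
      ≤ ∑ ω : Fin M → ι, (∏ i, p (ω i)) * ((q / l) ^ q * exp (-q) *
          (exp (l * ∑ i, Y (ω i)) + exp ((-l) * ∑ i, Y (ω i)))) :=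
        sum_le_sum fun ω _ => mul_le_mul_of_nonneg_left
          (abs_rpow_le_mul_exp_add_exp hq hl0 _) (hw ω)
    _ = (q / l) ^ q * exp (-q) *
          (∑ ω : Fin M → ι, (∏ i, p (ω i)) * exp (l * ∑ i, Y (ω i)) +
            ∑ ω : Fin M → ι, (∏ i, p (ω i)) * exp ((-l) * ∑ i, Y (ω i))) := by
      rw [← sum_add_distrib, mul_sum]
      exact sum_congr rfl fun ω _ => by ring
    _ ≤ (q / l) ^ q * exp (-q) * (exp q + exp q) := by
      gcongr
      · simpa [hmgf] using sum_prod_mul_exp_le (M := M) hp hp1 hY hmean hlB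
      · simpa [hmgf] using sum_prod_mul_exp_le (M := M) hp hp1 hY hmean hlB'
    _ = 2 * (√(q * M) * B) ^ q := by
      rw [← hql, mul_assoc, mul_add, ← exp_add, neg_add_cancel, exp_zero]
      ring

theorem sum_prod_mul_norm_sum_rpow_le {Z : ι → ℂ} {B q : ℝ} (hp : ∀ j, 0 ≤ p j)
    (hp1 : ∑ j, p j = 1) (hZ : ∀ j, ‖Z j‖ ≤ B) (hmean : ∑ j, (p j : ℂ) * Z j = 0)
    (hB : 0 < B) (hq : 0 < q) (hqM : q ≤ M) :
    ∑ ω : Fin M → ι, (∏ i, p (ω i)) * ‖∑ i, Z (ω i)‖ ^ q ≤ 4 * (2 * √(q * M) * B) ^ q := by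
  have hre := sum_prod_mul_abs_sum_rpow_le (M := M) (Y := fun j => (Z j).re) hp hp1
    (fun j => (Complex.abs_re_le_norm _).trans (hZ j))
    (by simpa [Complex.re_sum] using congrArg Complex.re hmean) hB hq hqM
  have him := sum_prod_mul_abs_sum_rpow_le (M := M) (Y := fun j => (Z j).im) hp hp1
    (fun j => (Complex.abs_im_le_norm _).trans (hZ j))
    (by simpa [Complex.im_sum] using congrArg Complex.im hmean) hB hq hqM
  have hw : ∀ ω : Fin M → ι, 0 ≤ ∏ i, p (ω i) := fun ω => prod_nonneg fun i _ => hp (ω i)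
  calc ∑ ω : Fin M → ι, (∏ i, p (ω i)) * ‖∑ i, Z (ω i)‖ ^ q
      ≤ ∑ ω : Fin M → ι, (∏ i, p (ω i)) *
          (2 ^ q * (|(∑ i, Z (ω i)).re| ^ q + |(∑ i, Z (ω i)).im| ^ q)) :=
        sum_le_sum fun ω _ => mul_le_mul_of_nonneg_left
          (norm_rpow_le_two_rpow_mul _ hq.le) (hw ω)
    _ = 2 ^ q * (∑ ω : Fin M → ι, (∏ i, p (ω i)) * |∑ i, (Z (ω i)).re| ^ q +
          ∑ ω : Fin M → ι, (∏ i, p (ω i)) * |∑ i, (Z (ω i)).im| ^ q) := by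
      rw [← sum_add_distrib, mul_sum]
      refine sum_congr rfl fun ω _ => ?_
      rw [Complex.re_sum, Complex.im_sum]
      ring
    _ ≤ 2 ^ q * (2 * (√(q * M) * B) ^ q + 2 * (√(q * M) * B) ^ q) := by gcongr
    _ = 4 * (2 * √(q * M) * B) ^ q := by
      rw [mul_assoc 2, mul_rpow zero_le_two (by positivity)]
      ring

end ProductWeights

theorem exists_integral_le_of_forall_sum_mul_le {X Ω : Type*} [MeasurableSpace X]
    {μ : Measure X} [IsProbabilityMeasure μ] [Fintype Ω] {w : Ω → ℝ} {F : Ω → X → ℝ} {C : ℝ}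
    (hw : ∀ ω, 0 ≤ w ω) (hw1 : ∑ ω, w ω = 1) (hF : ∀ ω, Integrable (F ω) μ)
    (hC : ∀ x, ∑ ω, w ω * F ω x ≤ C) :
    ∃ ω, ∫ x, F ω x ∂μ ≤ C := by
  obtain ⟨ω₁, -, -⟩ := exists_ne_zero_of_sum_ne_zero (hw1.trans_ne one_ne_zero)
  obtain ⟨ω₀, -, hmin⟩ := exists_min_image univ (fun ω => ∫ x, F ω x ∂μ) ⟨ω₁, mem_univ _⟩
  refine ⟨ω₀, ?_⟩
  calc ∫ x, F ω₀ x ∂μ = ∑ ω, w ω * ∫ x, F ω₀ x ∂μ := by rw [← sum_mul, hw1, one_mul]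
    _ ≤ ∑ ω, w ω * ∫ x, F ω x ∂μ :=
      sum_le_sum fun ω _ => mul_le_mul_of_nonneg_left (hmin ω (mem_univ _)) (hw ω)
    _ = ∫ x, ∑ ω, w ω * F ω x ∂μ := by
      rw [integral_finsetSum _ fun ω _ => (hF ω).const_mul _]
      simp only [integral_const_mul]
    _ ≤ ∫ _, C ∂μ :=
      integral_mono (integrable_finsetSum _ fun ω _ => (hF ω).const_mul _) (integrable_const C) hC
    _ = C := by simp

theorem eLpNorm_le_ofReal_of_integral_norm_rpow_le {α E : Type*} [MeasurableSpace α]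
    {μ : Measure α} [NormedAddCommGroup E] {F : α → E} {q R : ℝ} (hq : 0 < q) (hR : 0 ≤ R)
    (hF : MemLp F (ENNReal.ofReal q) μ) (h : ∫ x, ‖F x‖ ^ q ∂μ ≤ R ^ q) :
    eLpNorm F (ENNReal.ofReal q) μ ≤ ENNReal.ofReal R := by
  rw [hF.eLpNorm_eq_integral_rpow_norm (by simpa using hq) ofReal_ne_top, toReal_ofReal hq.le]
  refine ofReal_le_ofReal ?_
  calc (∫ x, ‖F x‖ ^ q ∂μ) ^ q⁻¹ ≤ (R ^ q) ^ q⁻¹ :=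
        rpow_le_rpow (integral_nonneg fun x => by positivity) h (inv_nonneg.2 hq.le)
    _ = R := rpow_rpow_inv hR hq.ne'

section Empirical

variable {ι : Type*} [Fintype ι] {M : ℕ}

def l1Weight (b : ι → ℂ) (j : ι) : ℝ := ‖b j‖ / ∑ i, ‖b i‖

/-- Coefficients of the empirical mean `M⁻¹ ∑ᵢ T (b_{ωᵢ} / ‖b_{ωᵢ}‖) e_{ωᵢ}` of the sample `ω`,
`T = ∑ ‖bⱼ‖`. As `bⱼ / ‖bⱼ‖ = 0` when `bⱼ = 0`, they vanish off the support of `b`. -/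
def empiricalCoeff [DecidableEq ι] (b : ι → ℂ) (ω : Fin M → ι) (j : ι) : ℂ :=
  (∑ i, ‖b i‖ : ℝ) / M * #{i | ω i = j} * (b j / ‖b j‖)

theorem l1Weight_nonneg (b : ι → ℂ) (j : ι) : 0 ≤ l1Weight b j := by
  unfold l1Weight
  positivity

theorem sum_l1Weight {b : ι → ℂ} (hT : 0 < ∑ i, ‖b i‖) : ∑ j, l1Weight b j = 1 := by
  simp only [l1Weight]
  rw [← sum_div, div_self hT.ne']

theorem l1Weight_mul_sum_norm_mul_div_norm {b : ι → ℂ} (hT : 0 < ∑ i, ‖b i‖) (j : ι) :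
    (l1Weight b j : ℂ) * ((∑ i, ‖b i‖ : ℝ) * (b j / ‖b j‖)) = b j := by
  rcases eq_or_ne (b j) 0 with hb | hb
  · simp [hb]
  · have : (‖b j‖ : ℂ) ≠ 0 := by simpa using hb
    have : ((∑ i, ‖b i‖ : ℝ) : ℂ) ≠ 0 := by exact_mod_cast hT.ne'
    simp only [l1Weight, Complex.ofReal_div]
    field_simp

theorem sum_empiricalCoeff_mul [DecidableEq ι] (b z : ι → ℂ) (ω : Fin M → ι) :
    ∑ j, empiricalCoeff b ω j * z j =
      (∑ i, ‖b i‖ : ℝ) / M * ∑ i, b (ω i) / ‖b (ω i)‖ * z (ω i) := by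
  rw [← sum_fiberwise' univ ω (fun j => b j / ‖b j‖ * z j), mul_sum]
  simp only [empiricalCoeff, sum_const, nsmul_eq_mul]
  exact sum_congr rfl fun j _ => by ring

theorem card_empiricalCoeff_ne_zero_le [DecidableEq ι] (b : ι → ℂ) (ω : Fin M → ι) :
    #{j | empiricalCoeff b ω j ≠ 0} ≤ M := by
  calc #{j | empiricalCoeff b ω j ≠ 0} ≤ #(univ.image ω) := by
        refine card_le_card fun j hj => ?_
        simp only [empiricalCoeff, mem_filter, mem_univ, true_and, ne_eq, mul_eq_zero,
          Nat.cast_eq_zero, card_eq_zero, filter_eq_empty_iff, not_or, not_forall,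
          not_not] at hj
        simpa using hj.1.2
    _ ≤ M := card_image_le.trans_eq (card_fin M)

theorem ne_zero_of_empiricalCoeff_ne_zero [DecidableEq ι] {b : ι → ℂ} {ω : Fin M → ι} {j : ι}
    (h : empiricalCoeff b ω j ≠ 0) : b j ≠ 0 := by
  rintro hb
  simp [empiricalCoeff, hb] at h

/-- The deviation of the draw `j` from its mean `∑ bₗ zₗ`, at a point where the characters
take the values `z`. -/
def sampleDeviation (b z : ι → ℂ) (j : ι) : ℂ :=
  ∑ l, b l * z l - (∑ i, ‖b i‖ : ℝ) * (b j / ‖b j‖) * z j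

theorem norm_sampleDeviation_le {b z : ι → ℂ} (hz : ∀ j, ‖z j‖ ≤ 1) (j : ι) :
    ‖sampleDeviation b z j‖ ≤ 2 * ∑ i, ‖b i‖ := by
  have hT : 0 ≤ ∑ i, ‖b i‖ := sum_nonneg fun i _ => norm_nonneg _
  have hmean : ‖∑ l, b l * z l‖ ≤ ∑ i, ‖b i‖ :=
    (norm_sum_le _ _).trans <| sum_le_sum fun l _ => by
      rw [norm_mul]
      exact mul_le_of_le_one_right (norm_nonneg _) (hz l)
  have hsgn : ‖b j / ‖b j‖‖ ≤ 1 := by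
    rw [norm_div, Complex.norm_real, norm_norm]
    exact div_self_le_one _
  have hdraw : ‖((∑ i, ‖b i‖ : ℝ) : ℂ) * (b j / ‖b j‖) * z j‖ ≤ ∑ i, ‖b i‖ := by
    rw [norm_mul, norm_mul, Complex.norm_real, norm_of_nonneg hT]
    exact (mul_le_mul (mul_le_of_le_one_right hT hsgn) (hz j) (norm_nonneg _) hT).trans_eq
      (mul_one _)
  exact (norm_sub_le _ _).trans (by linarith)

theorem sum_l1Weight_mul_sampleDeviation {b : ι → ℂ} (hT : 0 < ∑ i, ‖b i‖) (z : ι → ℂ) :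
    ∑ j, (l1Weight b j : ℂ) * sampleDeviation b z j = 0 := by
  have hdraw : ∑ j, (l1Weight b j : ℂ) * ((∑ i, ‖b i‖ : ℝ) * (b j / ‖b j‖) * z j) =
      ∑ j, b j * z j :=
    sum_congr rfl fun j _ => by rw [← mul_assoc, ← mul_assoc, mul_assoc (l1Weight b j : ℂ),
      l1Weight_mul_sum_norm_mul_div_norm hT j]
  simp only [sampleDeviation, mul_sub, sum_sub_distrib, ← sum_mul, hdraw]
  rw [← Complex.ofReal_sum, sum_l1Weight hT, Complex.ofReal_one, one_mul, sub_self]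

theorem sum_sub_empiricalCoeff_mul [DecidableEq ι] (hM : M ≠ 0) (b z : ι → ℂ)
    (ω : Fin M → ι) :
    ∑ j, (b j - empiricalCoeff b ω j) * z j = (M : ℂ)⁻¹ * ∑ i, sampleDeviation b z (ω i) := by
  have hM' : (M : ℂ) ≠ 0 := Nat.cast_ne_zero.mpr hM
  have hsum : ∑ i, sampleDeviation b z (ω i) = M * ∑ l, b l * z l -
      (∑ i, ‖b i‖ : ℝ) * ∑ i, b (ω i) / ‖b (ω i)‖ * z (ω i) := by
    simp only [sampleDeviation, sum_sub_distrib, sum_const, card_univ, Fintype.card_fin,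
      nsmul_eq_mul, mul_sum, mul_assoc]
  rw [hsum, mul_sub, ← mul_assoc, inv_mul_cancel₀ hM', one_mul]
  simp only [sub_mul, sum_sub_distrib, sum_empiricalCoeff_mul]
  ring

theorem sum_prod_l1Weight_mul_norm_sub_rpow_le [DecidableEq ι] (b z : ι → ℂ)
    (hz : ∀ j, ‖z j‖ ≤ 1) (hT : 0 < ∑ i, ‖b i‖) {q : ℝ} (hq : 0 < q) (hqM : q ≤ M) :
    ∑ ω : Fin M → ι, (∏ i, l1Weight b (ω i)) *
        ‖∑ j, (b j - empiricalCoeff b ω j) * z j‖ ^ q ≤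
      4 * (4 * √(q / M) * ∑ i, ‖b i‖) ^ q := by
  set T := ∑ i, ‖b i‖
  have hM : (0 : ℝ) < M := hq.trans_le hqM
  have hsqrt : (M : ℝ)⁻¹ * (2 * √(q * M) * (2 * T)) = 4 * √(q / M) * T := by
    rw [sqrt_div' _ hM.le, sqrt_mul hq.le]
    field_simp
    rw [sq_sqrt hM.le]
    ring
  calc ∑ ω : Fin M → ι, (∏ i, l1Weight b (ω i)) * ‖∑ j, (b j - empiricalCoeff b ω j) * z j‖ ^ q
      = (M : ℝ)⁻¹ ^ q * ∑ ω : Fin M → ι,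
          (∏ i, l1Weight b (ω i)) * ‖∑ i, sampleDeviation b z (ω i)‖ ^ q := by
        rw [mul_sum]
        refine sum_congr rfl fun ω _ => ?_
        rw [sum_sub_empiricalCoeff_mul (Nat.cast_pos.mp hM).ne', norm_mul, norm_inv,
          Complex.norm_natCast, mul_rpow (by positivity) (norm_nonneg _)]
        ring
    _ ≤ (M : ℝ)⁻¹ ^ q * (4 * (2 * √(q * M) * (2 * T)) ^ q) := by
      gcongr
      exact sum_prod_mul_norm_sum_rpow_le (l1Weight_nonneg b) (sum_l1Weight hT)
        (norm_sampleDeviation_le hz) (sum_l1Weight_mul_sampleDeviation hT z) (by positivity)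
        hq hqM
    _ = 4 * (4 * √(q / M) * T) ^ q := by
      rw [← hsqrt, mul_rpow (inv_nonneg.2 hM.le) (by positivity)]
      ring

end Empirical

theorem exists_eLpNorm_sum_sub_mul_le {X ι : Type*} [MeasurableSpace X] (μ : Measure X)
    [IsProbabilityMeasure μ] [Fintype ι] [DecidableEq ι] (e : ι → X → ℂ)
    (he : ∀ j, AEStronglyMeasurable (e j) μ) (he1 : ∀ j x, ‖e j x‖ ≤ 1) (b : ι → ℂ) {q : ℝ}
    (hq : 0 < q) {M : ℕ} (hqM : q ≤ M) :
    ∃ c : ι → ℂ, #{j | c j ≠ 0} ≤ M ∧ (∀ j, c j ≠ 0 → b j ≠ 0) ∧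
      eLpNorm (fun x => ∑ j, (b j - c j) * e j x) (ENNReal.ofReal q) μ ≤
        ENNReal.ofReal (4 ^ q⁻¹ * (4 * √(q / M) * ∑ j, ‖b j‖)) := by
  rcases (sum_nonneg fun j _ => norm_nonneg (b j)).eq_or_lt with hT | hT
  · have hb : ∀ j, b j = 0 := fun j => norm_eq_zero.mp <|
      (sum_eq_zero_iff_of_nonneg fun j _ => norm_nonneg (b j)).mp hT.symm j (mem_univ j)
    refine ⟨0, by simp, by simp, ?_⟩
    simp [hb]
  have hmemLp : ∀ c : ι → ℂ, MemLp (fun x => ∑ j, (b j - c j) * e j x) (ENNReal.ofReal q) μ :=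
    fun c => memLp_finsetSum _ fun j _ =>
      (MemLp.of_bound (he j) 1 (ae_of_all _ (he1 j))).const_mul _
  obtain ⟨ω, hω⟩ := exists_integral_le_of_forall_sum_mul_le (μ := μ)
    (fun ω : Fin M → ι => prod_nonneg fun i _ => l1Weight_nonneg b (ω i))
    (sum_prod_eq_one (sum_l1Weight hT))
    (fun ω => by
      simpa [toReal_ofReal hq.le] using (hmemLp (empiricalCoeff b ω)).integrable_norm_rpow')
    (fun x => sum_prod_l1Weight_mul_norm_sub_rpow_le b (e · x) (he1 · x) hT hq hqM)
  refine ⟨empiricalCoeff b ω, card_empiricalCoeff_ne_zero_le b ω,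
    fun j => ne_zero_of_empiricalCoeff_ne_zero,
    eLpNorm_le_ofReal_of_integral_norm_rpow_le hq (by positivity) (hmemLp _) (hω.trans_eq ?_)⟩
  rw [mul_rpow (rpow_nonneg (by norm_num) _) (by positivity), rpow_inv_rpow (by norm_num) hq.ne']

theorem norm_trigChar {d : ℕ} (k : Fin d → ℤ) (x : Fin d → ℝ) : ‖trigChar k x‖ = 1 := by
  rw [trigChar, Complex.norm_exp]
  simp [Complex.mul_re]

theorem continuous_trigChar {d : ℕ} (k : Fin d → ℤ) : Continuous (trigChar k) := by
  unfold trigChar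
  fun_prop

instance (d : ℕ) : IsProbabilityMeasure (unitCube d) :=
  ⟨by simp [unitCube, Real.volume_Icc_pi]⟩

theorem sum_sub_sum_filter_lt_sub_sum {R : Type*} [Ring R] {J : ℕ} (n : ℕ) (a c v : Fin J → R) :
    ∑ j, a j * v j - ∑ j ∈ univ.filter (fun j : Fin J => (j : ℕ) < n), a j * v j -
        ∑ j, c j * v j =
      ∑ j : Fin J, ((if n ≤ (j : ℕ) then a j else 0) - c j) * v j := by
  simp only [sum_filter, ← sum_sub_distrib]
  refine sum_congr rfl fun j _ => ?_
  split_ifs <;> first | omega | noncomm_ring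

theorem sum_norm_ite_le_sum_norm_filter {J m n : ℕ} (hmn : m ≤ n) (a : Fin J → ℂ) :
    ∑ j : Fin J, ‖if n ≤ (j : ℕ) then a j else 0‖ ≤
      ∑ j ∈ univ.filter (fun j : Fin J => m ≤ (j : ℕ)), ‖a j‖ := by
  simp only [apply_ite norm, norm_zero, ← sum_filter]
  refine sum_le_sum_of_subset_of_nonneg (fun j => ?_) fun j _ _ => norm_nonneg _
  simp only [mem_filter, mem_univ, true_and]
  omega

theorem four_rpow_inv_le_two {q : ℝ} (hq : 2 ≤ q) : (4 : ℝ) ^ q⁻¹ ≤ 2 :=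
  calc (4 : ℝ) ^ q⁻¹ ≤ 4 ^ (2⁻¹ : ℝ) :=
        rpow_le_rpow_of_exponent_le (by norm_num) (inv_anti₀ zero_lt_two hq)
    _ = 2 := by
      rw [show (4 : ℝ) = 2 ^ (2 : ℝ) by norm_num, ← Real.rpow_mul zero_le_two]
      norm_num

theorem random_m_term_approximation_general (d J : ℕ) (q : ℝ) (hq : 2 ≤ q) (m : ℕ) (hm : q ≤ m)
    (k : Fin J → (Fin d → ℤ)) (a : Fin J → ℂ) :
    ∃ c : Fin J → ℂ,
      (Finset.univ.filter fun j => c j ≠ 0).card ≤ 2 * m ∧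
      (∀ j : Fin J, c j ≠ 0 → 2 * m ≤ (j : ℕ)) ∧
      eLpNorm (fun x =>
          (∑ j, a j * trigChar (k j) x) -
          (∑ j ∈ Finset.univ.filter (fun j : Fin J => (j : ℕ) < 2 * m),
            a j * trigChar (k j) x) -
          ∑ j, c j * trigChar (k j) x) (ENNReal.ofReal q) (unitCube d) ≤
        ENNReal.ofReal ((80 / 3 : ℝ) * Real.sqrt (q / m) *
          ∑ j ∈ Finset.univ.filter (fun j : Fin J => m ≤ (j : ℕ)), ‖a j‖) := by
  obtain ⟨c, hcard, hsupp, hnorm⟩ := exists_eLpNorm_sum_sub_mul_le (unitCube d)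
    (fun j => trigChar (k j)) (fun j => (continuous_trigChar (k j)).aestronglyMeasurable)
    (fun j x => (norm_trigChar (k j) x).le) (fun j => if 2 * m ≤ (j : ℕ) then a j else 0)
    (M := 2 * m) (by linarith) (by push_cast; linarith)
  refine ⟨c, hcard, fun j hj => not_lt.mp fun hj' => hsupp j hj (if_neg (not_le.mpr hj')), ?_⟩
  simp_rw [sum_sub_sum_filter_lt_sub_sum]
  refine hnorm.trans (ENNReal.ofReal_le_ofReal ?_)
  have hsqrt : √(q / ↑(2 * m)) ≤ √(q / m) :=
    sqrt_le_sqrt (div_le_div_of_nonneg_left (by linarith) (by linarith) (by push_cast; linarith))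
  calc 4 ^ q⁻¹ * (4 * √(q / ↑(2 * m)) * ∑ j : Fin J, ‖if 2 * m ≤ (j : ℕ) then a j else 0‖)
      ≤ 2 * (4 * √(q / m) * ∑ j ∈ univ.filter (fun j : Fin J => m ≤ (j : ℕ)), ‖a j‖) := by
        gcongr
        · exact four_rpow_inv_le_two hq
        · exact sum_norm_ite_le_sum_norm_filter (by omega) a
    _ ≤ _ := by
      rw [← mul_assoc, ← mul_assoc]
      gcongr
      norm_num

/-- Key step of Theorem 4.4: for `2 ≤ q ≤ m`, a trigonometric polynomial
`t = ∑_{j<J} a_j e^{2πi k_j·x}` with non-increasingly arranged coefficients admits a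
`2m`-term approximant `s` with frequencies among `{k_j : j ≥ 2m}` such that
`‖t - t_{2m} - s‖_{L_q} ≤ (80/3) √(q/m) ‖t - t_m‖_{𝒜_1}`, where `t_n` collects the `n`
largest terms and `‖t - t_m‖_{𝒜_1} = ∑_{j ≥ m} |a_j|`. -/
theorem random_m_term_approximation (d J : ℕ) (q : ℝ) (hq : 2 ≤ q) (m : ℕ) (hm : q ≤ m)
    (k : Fin J → (Fin d → ℤ)) (hk : Function.Injective k)
    (a : Fin J → ℂ) (ha : ∀ i j : Fin J, i ≤ j → ‖a j‖ ≤ ‖a i‖) :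
    ∃ c : Fin J → ℂ,
      (Finset.univ.filter fun j => c j ≠ 0).card ≤ 2 * m ∧
      (∀ j : Fin J, c j ≠ 0 → 2 * m ≤ (j : ℕ)) ∧
      eLpNorm (fun x =>
          (∑ j, a j * trigChar (k j) x) -
          (∑ j ∈ Finset.univ.filter (fun j : Fin J => (j : ℕ) < 2 * m),
            a j * trigChar (k j) x) -
          ∑ j, c j * trigChar (k j) x) (ENNReal.ofReal q) (unitCube d) ≤
        ENNReal.ofReal ((80 / 3 : ℝ) * Real.sqrt (q / m) *
          ∑ j ∈ Finset.univ.filter (fun j : Fin J => m ≤ (j : ℕ)), ‖a j‖) :=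
  random_m_term_approximation_general d J q hq m hm k a
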